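/- arXiv:2508.04313 — 5 statements merged into one kernel-verified Lean document; each statement's English description precedes it below -/
import Mathlib

section
/- Let R be an n×n upper unitriangular real matrix (upper triangular with unit diagonal) and T an n×n upper unitriangular integer matrix, viewed over ℝ. Let s ∈ ℝⁿ, set s̃ = T⁻¹ s. For any ã ∈ ℝⁿ with a = T ã, and any index i, the i-th entry of R T (s̃ + ã) equals ãᵢ + ⟨tᵢ, (T_{i+1})⁻¹ a_{>i}⟩ + sᵢ + ⟨rᵢ, s_{>i} + a_{>i}⟩, where tᵢᵀ and rᵢᵀ denote the strictly-upper parts of the i-th rows of T and R respectively, a_{>i} = (a_{i+1},…,aₙ), and T_{i+1} is the lower-right unitriangular block of T starting at row i+1. In particular, the entries of R T (s̃ + ã) in rows i+1,…,n do not depend on ãᵢ. -/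
open Matrix

section Aux

variable {n : ℕ}

/-- Row expansion for an upper unitriangular real matrix. -/
private lemma ut_row_expand (M : Matrix (Fin n) (Fin n) ℝ)
    (hut : ∀ i j : Fin n, j < i → M i j = 0) (hdiag : ∀ i, M i i = 1)
    (x : Fin n → ℝ) (i : Fin n) :
    M.mulVec x i = x i + ∑ j : {j : Fin n // i < j}, M i j.1 * x j.1 := by
  have h1 : ∑ j ∈ Finset.Ioi i, M i j * x j
      = ∑ j : {j : Fin n // i < j}, M i j.1 * x j.1 :=
    Finset.sum_subtype (Finset.Ioi i) (fun j => Finset.mem_Ioi) _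
  have h2 : ∑ j : Fin n, M i j * x j
      = ∑ j ∈ insert i (Finset.Ioi i), M i j * x j := by
    symm
    apply Finset.sum_subset (Finset.subset_univ _)
    intro j _ hj
    simp only [Finset.mem_insert, Finset.mem_Ioi] at hj
    push_neg at hj
    have : j < i := lt_of_le_of_ne hj.2 hj.1
    rw [hut i j this, zero_mul]
  rw [mulVec, dotProduct, h2, Finset.sum_insert (by simp), hdiag i, one_mul, h1]

private lemma ut_isUnit_det {m : Type*} [Fintype m] [LinearOrder m] [DecidableEq m]
    (M : Matrix m m ℝ)
    (hut : ∀ i j : m, j < i → M i j = 0) (hdiag : ∀ i, M i i = 1) :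
    IsUnit M.det := by
  have : M.BlockTriangular id := fun i j h => hut i j h
  rw [Matrix.det_of_upperTriangular this]
  simp [hdiag]

private lemma ut_inv_mulVec_mulVec {m : Type*} [Fintype m] [LinearOrder m] [DecidableEq m]
    (M : Matrix m m ℝ)
    (hut : ∀ i j : m, j < i → M i j = 0) (hdiag : ∀ i, M i i = 1) (x : m → ℝ) :
    M⁻¹.mulVec (M.mulVec x) = x := by
  rw [mulVec_mulVec, Matrix.nonsing_inv_mul M (ut_isUnit_det M hut hdiag), one_mulVec]

end Aux

/-- The trailing principal block of `T` on the indices `> i` (i.e. `T_{i+1}` in the paper). -/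
def tailBlock {n : ℕ} (T : Matrix (Fin n) (Fin n) ℤ) (i : Fin n) :
    Matrix {j : Fin n // i < j} {j : Fin n // i < j} ℤ :=
  T.submatrix Subtype.val Subtype.val

/-- Coordinate formula for `R T (s̃ + b)` with `R` upper unitriangular over `ℝ`, `T` upper
unitriangular over `ℤ`, `s̃ = T⁻¹ s` and `a = T b`: the `i`-th entry equals
`bᵢ + ⟨tᵢ, (T_{i+1})⁻¹ a_{>i}⟩ + sᵢ + ⟨rᵢ, s_{>i} + a_{>i}⟩`, and the entries in rows `> i`
do not depend on `bᵢ`. -/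
theorem greedy_coordinate_formula {n : ℕ}
    (R : Matrix (Fin n) (Fin n) ℝ) (T : Matrix (Fin n) (Fin n) ℤ)
    (hRut : ∀ i j : Fin n, j < i → R i j = 0) (hRdiag : ∀ i, R i i = 1)
    (hTut : ∀ i j : Fin n, j < i → T i j = 0) (hTdiag : ∀ i, T i i = 1)
    (s : Fin n → ℝ) :
    (∀ b : Fin n → ℝ, ∀ i : Fin n,
      ((R * T.map (Int.cast : ℤ → ℝ)).mulVec
          ((T.map (Int.cast : ℤ → ℝ))⁻¹.mulVec s + b)) i
        = b i
          + (∑ j : {j : Fin n // i < j}, (T i j.1 : ℝ) *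
              (((tailBlock T i).map (Int.cast : ℤ → ℝ))⁻¹.mulVec
                (fun k => (T.map (Int.cast : ℤ → ℝ)).mulVec b k.1)) j)
          + s i
          + ∑ j : {j : Fin n // i < j},
              R i j.1 * (s j.1 + (T.map (Int.cast : ℤ → ℝ)).mulVec b j.1)) ∧
    (∀ b b' : Fin n → ℝ, ∀ i : Fin n, (∀ j, j ≠ i → b j = b' j) →
      ∀ k : Fin n, i < k →
        ((R * T.map (Int.cast : ℤ → ℝ)).mulVec
            ((T.map (Int.cast : ℤ → ℝ))⁻¹.mulVec s + b)) k
          = ((R * T.map (Int.cast : ℤ → ℝ)).mulVec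
              ((T.map (Int.cast : ℤ → ℝ))⁻¹.mulVec s + b')) k) := by
  have hT'ut : ∀ i j : Fin n, j < i → (T.map (Int.cast : ℤ → ℝ)) i j = 0 := by
    intro i j h; simp [Matrix.map_apply, hTut i j h]
  have hT'diag : ∀ i, (T.map (Int.cast : ℤ → ℝ)) i i = 1 := by
    intro i; simp [Matrix.map_apply, hTdiag i]
  have key : ∀ b : Fin n → ℝ,
      (R * T.map (Int.cast : ℤ → ℝ)).mulVec
          ((T.map (Int.cast : ℤ → ℝ))⁻¹.mulVec s + b)
        = R.mulVec s + R.mulVec ((T.map (Int.cast : ℤ → ℝ)).mulVec b) := by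
    intro b
    rw [mulVec_add, ← mulVec_mulVec, ← mulVec_mulVec,
      mulVec_mulVec s (T.map (Int.cast : ℤ → ℝ)) (T.map (Int.cast : ℤ → ℝ))⁻¹,
      Matrix.mul_nonsing_inv _ (ut_isUnit_det _ hT'ut hT'diag), one_mulVec]
  constructor
  · intro b i
    -- the tail-block inverse recovers the tail of `b`
    have hb' : ((tailBlock T i).map (Int.cast : ℤ → ℝ))⁻¹.mulVec
        (fun k : {j : Fin n // i < j} => (T.map (Int.cast : ℤ → ℝ)).mulVec b k.1)
        = fun k : {j : Fin n // i < j} => b k.1 := by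
      have hMut : ∀ p q : {j : Fin n // i < j}, q < p →
          ((tailBlock T i).map (Int.cast : ℤ → ℝ)) p q = 0 := by
        intro p q h
        simp [tailBlock, Matrix.map_apply, hTut p.1 q.1 (Subtype.coe_lt_coe.2 h)]
      have hMdiag : ∀ p, ((tailBlock T i).map (Int.cast : ℤ → ℝ)) p p = 1 := by
        intro p; simp [tailBlock, Matrix.map_apply, hTdiag p.1]
      have hMa : ((tailBlock T i).map (Int.cast : ℤ → ℝ)).mulVec
          (fun k : {j : Fin n // i < j} => b k.1)
          = fun k : {j : Fin n // i < j} => (T.map (Int.cast : ℤ → ℝ)).mulVec b k.1 := by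
        funext j
        have hrestr : (T.map (Int.cast : ℤ → ℝ)).mulVec b j.1
            = ∑ m ∈ Finset.Ioi i, (T.map (Int.cast : ℤ → ℝ)) j.1 m * b m := by
          rw [mulVec, dotProduct]
          symm
          apply Finset.sum_subset (Finset.subset_univ _)
          intro m _ hm
          simp only [Finset.mem_Ioi] at hm
          rw [hT'ut j.1 m (lt_of_le_of_lt (not_lt.1 hm) j.2), zero_mul]
        rw [mulVec, dotProduct, hrestr,
          Finset.sum_subtype (Finset.Ioi i) (fun m => Finset.mem_Ioi)]
        · simp [tailBlock, Matrix.map_apply]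
        · infer_instance
      rw [← hMa, ut_inv_mulVec_mulVec _ hMut hMdiag]
    have hL := congrFun (key b) i
    rw [hL, Pi.add_apply, ut_row_expand R hRut hRdiag s i,
      ut_row_expand R hRut hRdiag _ i,
      ut_row_expand (T.map (Int.cast : ℤ → ℝ)) hT'ut hT'diag b i, hb']
    simp only [Matrix.map_apply, mul_add, Finset.sum_add_distrib]
    ring
  · intro b b' i hbb' k hik
    have haj : ∀ j : Fin n, i < j →
        (T.map (Int.cast : ℤ → ℝ)).mulVec b j = (T.map (Int.cast : ℤ → ℝ)).mulVec b' j := by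
      intro j hij
      simp only [mulVec, dotProduct]
      apply Finset.sum_congr rfl
      intro m _
      rcases lt_or_ge m j with h | h
      · rw [hT'ut j m h]; ring
      · rw [hbb' m (lt_of_lt_of_le hij h).ne']
    have hRa : R.mulVec ((T.map (Int.cast : ℤ → ℝ)).mulVec b) k
        = R.mulVec ((T.map (Int.cast : ℤ → ℝ)).mulVec b') k := by
      have e : ∀ x : Fin n → ℝ, R.mulVec x k = ∑ j, R k j * x j := fun x => rfl
      rw [e, e]
      apply Finset.sum_congr rfl
      intro j _
      rcases lt_or_ge j k with h | h
      · rw [hRut k j h]; ring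
      · rw [haj j (lt_of_lt_of_le hik h)]
    rw [congrFun (key b) k, congrFun (key b') k, Pi.add_apply, Pi.add_apply, hRa]
end

section
/- Let R be an n×n upper unitriangular real matrix and T an n×n upper unitriangular integer matrix. Fix s ∈ ℝⁿ and integers a_{i+1},…,aₙ, and set s̃ = T⁻¹ s. Suppose the real number sᵢ + ⟨rᵢ, s_{>i} + a_{>i}⟩ has fractional part ≠ 1/2. Then the integer ãᵢ minimizing |(R T (s̃ + ã))ᵢ|² over ãᵢ ∈ ℤ satisfies ãᵢ = aᵢ⋆ − ⟨tᵢ, (T_{i+1})⁻¹ a_{>i}⟩, where aᵢ⋆ = −round(sᵢ + ⟨rᵢ, s_{>i} + a_{>i}⟩) is the integer minimizing |(R(s + a))ᵢ|² over aᵢ ∈ ℤ. Consequently the greedy (nearest-plane) choice is the same with or without the lattice reduction T. -/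
open Matrix

/-- `wTerm R s a i = sᵢ + ⟨rᵢ, s_{>i} + a_{>i}⟩`. -/
def wTerm {n : ℕ} (R : Matrix (Fin n) (Fin n) ℝ) (s : Fin n → ℝ) (a : Fin n → ℤ)
    (i : Fin n) : ℝ :=
  s i + ∑ j : {j : Fin n // i < j}, R i j.1 * (s j.1 + (a j.1 : ℝ))

/-- `offTerm T a i = ⟨tᵢ, (T_{i+1})⁻¹ a_{>i}⟩`, an integer. -/
noncomputable def offTerm {n : ℕ} (T : Matrix (Fin n) (Fin n) ℤ) (a : Fin n → ℤ) (i : Fin n) : ℤ :=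
  ∑ j : {j : Fin n // i < j},
    T i j.1 * ((tailBlock T i)⁻¹.mulVec (fun k => a k.1)) j

/-- The `i`-th coordinate of `R T (s̃ + ã)` where `ã` is `T⁻¹ a` with its `i`-th entry
replaced by the candidate integer `c`. -/
noncomputable def coordRT {n : ℕ} (R : Matrix (Fin n) (Fin n) ℝ)
    (T : Matrix (Fin n) (Fin n) ℤ) (s : Fin n → ℝ) (a : Fin n → ℤ)
    (i : Fin n) (c : ℤ) : ℝ :=
  ((R * T.map (Int.cast : ℤ → ℝ)).mulVec
    ((T.map (Int.cast : ℤ → ℝ))⁻¹.mulVec s +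
      Function.update ((T.map (Int.cast : ℤ → ℝ))⁻¹.mulVec (fun j => (a j : ℝ)))
        i (c : ℝ))) i

/-- Splitting a sum over `Fin n` at `i` when all terms with index `< i` vanish. -/
lemma sum_tail_split {n : ℕ} {M : Type*} [AddCommMonoid M] (i : Fin n) (f : Fin n → M)
    (h0 : ∀ j, j < i → f j = 0) :
    ∑ j, f j = f i + ∑ j : {j : Fin n // i < j}, f j.1 := by
  have h1 : ∑ j : {j : Fin n // i < j}, f j.1
      = ∑ j ∈ Finset.univ.filter (fun j => i < j), f j := by
    exact (Finset.sum_subtype _ (fun x => by simp) f).symm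
  rw [h1, ← Finset.sum_filter_add_sum_filter_not Finset.univ (fun j => i < j) f, add_comm]
  congr 1
  rw [Finset.sum_eq_single i]
  · intro b hb hbi
    simp only [Finset.mem_filter, Finset.mem_univ, true_and, not_lt] at hb
    exact h0 b (lt_of_le_of_ne hb hbi)
  · simp

/-- Same, when also the `i`-th term vanishes. -/
lemma sum_tail {n : ℕ} {M : Type*} [AddCommMonoid M] (i : Fin n) (f : Fin n → M)
    (h0 : ∀ j, j ≤ i → f j = 0) :
    ∑ j, f j = ∑ j : {j : Fin n // i < j}, f j.1 := by
  rw [sum_tail_split i f (fun j hj => h0 j hj.le), h0 i le_rfl, zero_add]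

/-- The rounding lemma: if the fractional part of `x` is not `1/2`, then `round x`
is the unique closest integer. -/
lemma round_strict_min {x : ℝ} (hx : Int.fract x ≠ 1/2) {m : ℤ} (hm : m ≠ round x) :
    |x - round x| < |x - m| := by
  have hf0 : 0 ≤ Int.fract x := Int.fract_nonneg x
  have hf1 : Int.fract x < 1 := Int.fract_lt_one x
  have h1 : |x - round x| < 1/2 := by
    rcases lt_or_gt_of_ne hx with h | h
    · calc |x - round x| ≤ Int.fract x := by
            rw [abs_sub_round_eq_min]; exact min_le_left _ _
        _ < 1/2 := h
    · calc |x - round x| ≤ 1 - Int.fract x := by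
            rw [abs_sub_round_eq_min]; exact min_le_right _ _
        _ < 1/2 := by linarith
  have h2 : (1:ℝ) ≤ |(round x : ℝ) - m| := by
    have hne : (round x : ℤ) - m ≠ 0 := sub_ne_zero.mpr (Ne.symm hm)
    have := Int.one_le_abs hne
    calc (1:ℝ) ≤ ((|round x - m| : ℤ) : ℝ) := by exact_mod_cast this
      _ = |(round x : ℝ) - m| := by push_cast; rfl
  have h3 : |(round x : ℝ) - m| ≤ |x - round x| + |x - m| :=
    calc |(round x : ℝ) - m| = |-(x - round x) + (x - m)| := by ring_nf
      _ ≤ |(-(x - round x))| + |x - m| := abs_add_le _ _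
      _ = |x - round x| + |x - m| := by rw [abs_neg]
  linarith

/-- The first coordinate computation: `(R(s + update a i b))ᵢ = wᵢ + b`. -/
lemma coord_plain {n : ℕ} (R : Matrix (Fin n) (Fin n) ℝ)
    (hRut : ∀ i j : Fin n, j < i → R i j = 0) (hRdiag : ∀ i, R i i = 1)
    (s : Fin n → ℝ) (a : Fin n → ℤ) (i : Fin n) (b : ℤ) :
    (R.mulVec (s + fun j => ((Function.update a i b j : ℤ) : ℝ))) i
      = wTerm R s a i + b := by
  have h0 : ∀ j, j < i →
      R i j * ((s + fun j => ((Function.update a i b j : ℤ) : ℝ)) j) = 0 := by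
    intro j hj; rw [hRut i j hj, zero_mul]
  calc (R.mulVec (s + fun j => ((Function.update a i b j : ℤ) : ℝ))) i
      = ∑ j, R i j * ((s + fun j => ((Function.update a i b j : ℤ) : ℝ)) j) := rfl
    _ = R i i * ((s + fun j => ((Function.update a i b j : ℤ) : ℝ)) i)
        + ∑ j : {j : Fin n // i < j},
            R i j.1 * ((s + fun j => ((Function.update a i b j : ℤ) : ℝ)) j.1) :=
        sum_tail_split i _ h0
    _ = wTerm R s a i + b := by
        rw [hRdiag i]
        simp only [Pi.add_apply, Function.update_self, one_mul]
        have : ∀ j : {j : Fin n // i < j},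
            R i j.1 * (s j.1 + ((Function.update a i b j.1 : ℤ) : ℝ))
              = R i j.1 * (s j.1 + (a j.1 : ℝ)) := by
          intro j
          rw [Function.update_of_ne (Ne.symm (ne_of_lt j.2))]
        rw [Finset.sum_congr rfl fun j _ => this j]
        unfold wTerm; ring

/-- The greedy (nearest-plane) choice at step `i` is the same with or without the
unitriangular lattice reduction `T`: the minimizer of `|(R T (s̃+ã))ᵢ|²` over `ãᵢ ∈ ℤ` is
`aᵢ⋆ − ⟨tᵢ, (T_{i+1})⁻¹ a_{>i}⟩` where `aᵢ⋆ = −round(sᵢ + ⟨rᵢ, s_{>i}+a_{>i}⟩)` is the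
minimizer of `|(R(s+a))ᵢ|²` over `aᵢ ∈ ℤ`. -/
theorem greedy_choice_invariant_under_LR {n : ℕ}
    (R : Matrix (Fin n) (Fin n) ℝ) (T : Matrix (Fin n) (Fin n) ℤ)
    (hRut : ∀ i j : Fin n, j < i → R i j = 0) (hRdiag : ∀ i, R i i = 1)
    (hTut : ∀ i j : Fin n, j < i → T i j = 0) (hTdiag : ∀ i, T i i = 1)
    (s : Fin n → ℝ) (a : Fin n → ℤ) (i : Fin n)
    (hfrac : Int.fract (wTerm R s a i) ≠ 1/2) :
    (∀ b : ℤ, b ≠ -round (wTerm R s a i) →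
      |(R.mulVec (s + fun j => ((Function.update a i (-round (wTerm R s a i)) j : ℤ) : ℝ))) i| ^ 2
        < |(R.mulVec (s + fun j => ((Function.update a i b j : ℤ) : ℝ))) i| ^ 2) ∧
    (∀ b : ℤ, b ≠ -round (wTerm R s a i) - offTerm T a i →
      |coordRT R T s a i (-round (wTerm R s a i) - offTerm T a i)| ^ 2
        < |coordRT R T s a i b| ^ 2) := by
  set w := wTerm R s a i with hw
  -- abbreviations
  have key : ∀ (u v : ℝ), |u| < |v| → |u| ^ 2 < |v| ^ 2 := by
    intro u v h
    exact pow_lt_pow_left₀ h (abs_nonneg u) (by norm_num)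
  have hmin : ∀ (b : ℤ), b ≠ -round w → |w + (-round w : ℤ)| < |w + (b : ℤ)| := by
    intro b hb
    have hm' : -b ≠ round w := by omega
    have h1 : |w - round w| < |w - ((-b : ℤ) : ℝ)| := round_strict_min hfrac hm'
    have e1 : w + ((-round w : ℤ) : ℝ) = w - round w := by push_cast; ring
    have e2 : w + (b : ℝ) = w - ((-b : ℤ) : ℝ) := by push_cast; ring
    rw [e1, e2]; exact_mod_cast h1
  constructor
  · intro b hb
    rw [coord_plain R hRut hRdiag s a i, coord_plain R hRut hRdiag s a i]
    exact key _ _ (hmin b hb)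
  · -- second part: compute coordRT
    intro b hb
    set T' : Matrix (Fin n) (Fin n) ℝ := T.map (Int.cast : ℤ → ℝ) with hT'
    have hT'ut : ∀ i j : Fin n, j < i → T' i j = 0 := by
      intro i j hj; simp [hT', Matrix.map_apply, hTut i j hj]
    have hT'diag : ∀ i, T' i i = 1 := by
      intro i; simp [hT', Matrix.map_apply, hTdiag i]
    -- determinants
    have hdetT' : T'.det = 1 := by
      have hbt : T'.BlockTriangular id := fun i j h => hT'ut i j h
      rw [Matrix.det_of_upperTriangular hbt]
      simp [hT'diag]
    have hdetT'u : IsUnit T'.det := by rw [hdetT']; exact isUnit_one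
    set B : Matrix {j : Fin n // i < j} {j : Fin n // i < j} ℤ := tailBlock T i with hB
    have hBapp : ∀ k m : {j : Fin n // i < j}, B k m = T k.1 m.1 := fun k m => rfl
    have hdetB : B.det = 1 := by
      have hbt : B.BlockTriangular id :=
        fun k m h => hTut k.1 m.1 (by exact_mod_cast h)
      rw [Matrix.det_of_upperTriangular hbt]
      simp [hBapp, hTdiag]
    have hdetBu : IsUnit B.det := by rw [hdetB]; exact isUnit_one
    set u : {j : Fin n // i < j} → ℤ := B⁻¹.mulVec (fun k => a k.1) with hu
    have hBu : B.mulVec u = fun k => a k.1 := by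
      rw [hu, Matrix.mulVec_mulVec, Matrix.mul_nonsing_inv B hdetBu, Matrix.one_mulVec]
    -- the real tail system
    set x : Fin n → ℝ := T'⁻¹.mulVec (fun j => (a j : ℝ)) with hx
    have hT'x : T'.mulVec x = fun j => (a j : ℝ) := by
      rw [hx, Matrix.mulVec_mulVec, Matrix.mul_nonsing_inv T' hdetT'u, Matrix.one_mulVec]
    -- x restricted to the tail equals u (cast)
    have hxu : ∀ k : {j : Fin n // i < j}, x k.1 = (u k : ℝ) := by
      set B' : Matrix {j : Fin n // i < j} {j : Fin n // i < j} ℝ :=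
        B.map (Int.cast : ℤ → ℝ) with hB'
      have hdetB' : B'.det = 1 := by
        have hmap := RingHom.map_det (Int.castRingHom ℝ) B
        simp only [RingHom.mapMatrix_apply] at hmap
        rw [hB']
        have : B.map (Int.cast : ℤ → ℝ) = B.map (Int.castRingHom ℝ) := rfl
        rw [this, ← hmap, hdetB]
        simp
      have hdetB'u : IsUnit B'.det := by rw [hdetB']; exact isUnit_one
      have h1 : B'.mulVec (fun k => x k.1) = fun k => (a k.1 : ℝ) := by
        funext k
        have := congrFun hT'x k.1
        calc B'.mulVec (fun k => x k.1) k
            = ∑ m : {j : Fin n // i < j}, T' k.1 m.1 * x m.1 := by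
              simp [Matrix.mulVec, dotProduct, hB', hBapp, hT', Matrix.map_apply]
          _ = ∑ m, T' k.1 m * x m := by
              symm
              apply sum_tail i (fun m => T' k.1 m * x m)
              intro m hm
              rw [hT'ut k.1 m (lt_of_le_of_lt hm k.2), zero_mul]
          _ = (a k.1 : ℝ) := this
      have h2 : B'.mulVec (fun k => (u k : ℝ)) = fun k => (a k.1 : ℝ) := by
        funext k
        have := congrFun hBu k
        calc B'.mulVec (fun k => (u k : ℝ)) k
            = ((∑ m, B k m * u m : ℤ) : ℝ) := by
              simp [Matrix.mulVec, dotProduct, hB', Matrix.map_apply]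
          _ = ((B.mulVec u) k : ℝ) := rfl
          _ = (a k.1 : ℝ) := by rw [this]
      have hinj : Function.Injective B'.mulVec := by
        intro y z hyz
        have : B'⁻¹.mulVec (B'.mulVec y) = B'⁻¹.mulVec (B'.mulVec z) := by rw [hyz]
        rwa [Matrix.mulVec_mulVec, Matrix.mulVec_mulVec,
          Matrix.nonsing_inv_mul B' hdetB'u, Matrix.one_mulVec, Matrix.one_mulVec] at this
      have := hinj (h1.trans h2.symm)
      exact fun k => congrFun this k
    -- compute coordRT
    have hcoord : ∀ c : ℤ, coordRT R T s a i c = w + (c + offTerm T a i) := by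
      intro c
      set v : Fin n → ℝ := Function.update x i (c : ℝ) with hv
      have step1 : coordRT R T s a i c = (R.mulVec (s + T'.mulVec v)) i := by
        unfold coordRT
        rw [← Matrix.mulVec_mulVec]
        congr 2
        rw [Matrix.mulVec_add]
        congr 1
        rw [Matrix.mulVec_mulVec, Matrix.mul_nonsing_inv T' hdetT'u, Matrix.one_mulVec]
      -- (T' v) at j > i equals a j
      have tail_eq : ∀ j : Fin n, i < j → T'.mulVec v j = (a j : ℝ) := by
        intro j hj
        have : T'.mulVec v j = T'.mulVec x j := by
          simp only [Matrix.mulVec, dotProduct]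
          apply Finset.sum_congr rfl
          intro k _
          by_cases hk : k = i
          · subst hk
            rw [hT'ut j k hj, zero_mul, zero_mul]
          · rw [hv, Function.update_of_ne hk]
        rw [this, congrFun hT'x j]
      -- (T' v) at i
      have diag_eq : T'.mulVec v i = (c : ℝ) + (offTerm T a i : ℝ) := by
        have h0 : ∀ k, k < i → T' i k * v k = 0 := by
          intro k hk; rw [hT'ut i k hk, zero_mul]
        calc T'.mulVec v i = ∑ k, T' i k * v k := rfl
          _ = T' i i * v i + ∑ k : {j : Fin n // i < j}, T' i k.1 * v k.1 :=
              sum_tail_split i _ h0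
          _ = (c : ℝ) + (offTerm T a i : ℝ) := by
              rw [hT'diag i, one_mul, hv, Function.update_self]
              congr 1
              have : ∀ k : {j : Fin n // i < j},
                  T' i k.1 * Function.update x i (c:ℝ) k.1
                    = ((T i k.1 * u k : ℤ) : ℝ) := by
                intro k
                rw [Function.update_of_ne (Ne.symm (ne_of_lt k.2)), hxu k]
                push_cast
                simp [hT', Matrix.map_apply]
              rw [Finset.sum_congr rfl fun k _ => this k]
              rw [← Int.cast_sum]
              congr 1
      -- final coordinate computation
      have h0 : ∀ j, j < i → R i j * ((s + T'.mulVec v) j) = 0 := by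
        intro j hj; rw [hRut i j hj, zero_mul]
      rw [step1]
      calc (R.mulVec (s + T'.mulVec v)) i
          = ∑ j, R i j * ((s + T'.mulVec v) j) := rfl
        _ = R i i * ((s + T'.mulVec v) i)
            + ∑ j : {j : Fin n // i < j}, R i j.1 * ((s + T'.mulVec v) j.1) :=
            sum_tail_split i _ h0
        _ = w + (c + offTerm T a i) := by
            rw [hRdiag i, one_mul]
            have : ∀ j : {j : Fin n // i < j},
                R i j.1 * ((s + T'.mulVec v) j.1)
                  = R i j.1 * (s j.1 + (a j.1 : ℝ)) := by
              intro j
              rw [Pi.add_apply, tail_eq j.1 j.2]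
            rw [Finset.sum_congr rfl fun j _ => this j]
            rw [Pi.add_apply, diag_eq]
            rw [hw]; unfold wTerm
            push_cast
            ring
    rw [hcoord, hcoord]
    apply key
    have e1 : w + ((-round w - offTerm T a i : ℤ) + offTerm T a i) = w + ((-round w : ℤ) : ℝ) := by
      push_cast; ring
    have e2 : w + ((b : ℝ) + (offTerm T a i : ℝ)) = w + (((b + offTerm T a i : ℤ)) : ℝ) := by
      push_cast; ring
    rw [e1, e2]
    have : b + offTerm T a i ≠ -round w := by omega
    exact hmin (b + offTerm T a i) this
end

section
/- Let B = Q R be the QR decomposition of an invertible n×n real matrix B, with R upper triangular with positive diagonal entries satisfying r₁₁ ≤ r₂₂ ≤ ⋯ ≤ rₙₙ. During the size-reduction step of the LLL algorithm with parameter δ ≤ 1 (Lovász condition δ r²_{k-1,k-1} ≤ r²_{kk} + r²_{k-1,k}), no swap (column exchange) is ever performed: the Lovász condition holds at every step because r²_{k-1,k-1} ≤ r²_{kk}. Consequently the output unimodular matrix T is upper triangular with unit diagonal and the diagonal of the reduced R̃ equals the diagonal of R. -/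
open Matrix

/-- One size-reduction step of the LLL algorithm acting on the pair
(triangular factor, unimodular factor): column `k` is reduced against column `l < k` by
the integer `round (r_{lk}/r_{ll})`. -/
def SizeReductionStep {n : ℕ} :
    (Matrix (Fin n) (Fin n) ℝ × Matrix (Fin n) (Fin n) ℤ) →
    (Matrix (Fin n) (Fin n) ℝ × Matrix (Fin n) (Fin n) ℤ) → Prop :=
  fun p q => ∃ k l : Fin n, l < k ∧
    q.1 = p.1 * (1 - Matrix.single l k ((round (p.1 l k / p.1 l l) : ℤ) : ℝ)) ∧
    q.2 = p.2 * (1 - Matrix.single l k (round (p.1 l k / p.1 l l)))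

private lemma mul_one_sub_std_apply {α : Type*} [CommRing α] {n : ℕ}
    (P : Matrix (Fin n) (Fin n) α) (l k : Fin n) (c : α) (i j : Fin n) :
    (P * (1 - Matrix.single l k c)) i j
      = P i j - (if j = k then P i l * c else 0) := by
  rw [Matrix.mul_sub, Matrix.mul_one, Matrix.sub_apply]
  by_cases h : j = k
  · subst h; simp
  · simp [h]

private lemma lll_invariant {n : ℕ}
    (R : Matrix (Fin n) (Fin n) ℝ)
    (hRut : ∀ i j : Fin n, j < i → R i j = 0)
    (p : Matrix (Fin n) (Fin n) ℝ × Matrix (Fin n) (Fin n) ℤ)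
    (hreach : Relation.ReflTransGen SizeReductionStep (R, 1) p) :
    (∀ i j : Fin n, j < i → p.1 i j = 0) ∧ (∀ i, p.1 i i = R i i) ∧
    (∀ i j : Fin n, j < i → p.2 i j = 0) ∧ (∀ i, p.2 i i = 1) := by
  induction hreach with
  | refl => exact ⟨hRut, fun _ => rfl, fun i j h => by simp [Matrix.one_apply, Fin.ne_of_gt h, (Fin.ne_of_gt h).symm],
      fun i => by simp⟩
  | tail hab step ih =>
    rename_i b c
    obtain ⟨hb1, hb2, hb3, hb4⟩ := ih
    obtain ⟨k, l, hlk, h1, h2⟩ := step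
    have key1 : ∀ i j : Fin n, j < i → c.1 i j = 0 := by
      intro i j hji
      rw [h1, mul_one_sub_std_apply]
      by_cases hjk : j = k
      · subst hjk
        rw [hb1 i j hji, hb1 i l (hlk.trans hji), if_pos rfl, zero_mul, sub_zero]
      · rw [if_neg hjk, hb1 i j hji, sub_zero]
    have key2 : ∀ i, c.1 i i = R i i := by
      intro i
      rw [h1, mul_one_sub_std_apply]
      by_cases hik : i = k
      · subst hik
        rw [if_pos rfl, hb1 i l hlk, zero_mul, sub_zero, hb2]
      · rw [if_neg hik, sub_zero, hb2]
    have key3 : ∀ i j : Fin n, j < i → c.2 i j = 0 := by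
      intro i j hji
      rw [h2, mul_one_sub_std_apply]
      by_cases hjk : j = k
      · subst hjk
        rw [hb3 i j hji, hb3 i l (hlk.trans hji), if_pos rfl, zero_mul, sub_zero]
      · rw [if_neg hjk, hb3 i j hji, sub_zero]
    have key4 : ∀ i, c.2 i i = 1 := by
      intro i
      rw [h2, mul_one_sub_std_apply]
      by_cases hik : i = k
      · subst hik
        rw [if_pos rfl, hb3 i l hlk, zero_mul, sub_zero, hb4]
      · rw [if_neg hik, sub_zero, hb4]
    exact ⟨key1, key2, key3, key4⟩

/-- If `R` is upper triangular with positive nondecreasing diagonal and `δ ≤ 1`, then during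
LLL (which results from `R`, starting with `T = 1`, by size-reduction steps) the Lovász
condition `δ r̃²_{kk} ≤ r̃²_{k+1,k+1} + r̃²_{k,k+1}` holds at every step, so no swap is ever
performed; consequently the unimodular matrix `T` is upper triangular with unit diagonal and
the diagonal of the reduced `Rred` equals the diagonal of `R`. -/
theorem lll_no_swap_for_sorted_unitriangular {n : ℕ}
    (R : Matrix (Fin n) (Fin n) ℝ)
    (hRut : ∀ i j : Fin n, j < i → R i j = 0)
    (hRdiag : ∀ i, 0 < R i i)
    (hmono : ∀ i j : Fin n, i ≤ j → R i i ≤ R j j)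
    (δ : ℝ) (hδ : δ ≤ 1)
    (Rred : Matrix (Fin n) (Fin n) ℝ) (T : Matrix (Fin n) (Fin n) ℤ)
    (hreach : Relation.ReflTransGen SizeReductionStep (R, 1) (Rred, T)) :
    (∀ k : Fin n, ∀ h : (k : ℕ) + 1 < n,
      δ * (Rred k k) ^ 2
        ≤ (Rred ⟨(k : ℕ) + 1, h⟩ ⟨(k : ℕ) + 1, h⟩) ^ 2 + (Rred k ⟨(k : ℕ) + 1, h⟩) ^ 2) ∧
    (∀ i j : Fin n, j < i → T i j = 0) ∧ (∀ i, T i i = 1) ∧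
    (∀ i, Rred i i = R i i) := by
  obtain ⟨h1, h2, h3, h4⟩ := lll_invariant R hRut (Rred, T) hreach
  simp only at h1 h2 h3 h4
  refine ⟨?_, h3, h4, h2⟩
  intro k h
  have hle : R k k ≤ R ⟨(k : ℕ) + 1, h⟩ ⟨(k : ℕ) + 1, h⟩ :=
    hmono _ _ (by simp [Fin.le_def])
  have h0 : 0 < R k k := hRdiag k
  have hsq : (Rred k ⟨(k : ℕ) + 1, h⟩) ^ 2 ≥ 0 := sq_nonneg _
  rw [h2, h2]
  nlinarith [sq_nonneg (Rred k ⟨(k : ℕ) + 1, h⟩), sq_nonneg (R k k)]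
end

section
/- Let T be an n×n upper unitriangular integer matrix and let s ∈ ℝⁿ be a random vector with independent coordinates each uniform on [-1/2,1/2). Define Zᵢ = Mod((T⁻¹ s)ᵢ) where Mod reduces modulo 1 into [-1/2,1/2). Then Z₁,…,Zₙ are independent and each Zᵢ is uniform on [-1/2,1/2). In particular E[Z Zᵀ] = (1/12) Iₙ. -/
open MeasureTheory Matrix

open Set

/-- `modHalf t` is the representative of `t` modulo `1` in `[-1/2, 1/2)`. -/
noncomputable def modHalf (t : ℝ) : ℝ := t - round t

noncomputable def μ0 : Measure ℝ := volume.restrict (Set.Ico (-(1/2) : ℝ) (1/2))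

lemma measurable_modHalf : Measurable modHalf := by
  have h : modHalf = fun t => Int.fract (t + 1/2) - 1/2 := by
    funext t
    simp only [modHalf, Int.fract, round_eq]
    ring
  rw [h]
  exact (measurable_fract.comp (measurable_id.add_const _)).sub_const _

lemma modHalf_mem : ∀ t : ℝ, modHalf t ∈ Ico (-(1/2) : ℝ) (1/2) := by
  intro t
  constructor
  · have := Int.floor_le (t + 1/2)
    simp only [modHalf, round_eq]
    linarith
  · have := Int.lt_floor_add_one (t + 1/2)
    simp only [modHalf, round_eq]
    linarith

lemma modHalf_eq_toIcoMod (t : ℝ) : modHalf t = toIcoMod (one_pos : (0:ℝ) < 1) (-(1/2)) t := by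
  symm
  rw [toIcoMod_eq_iff]
  have h := modHalf_mem t
  refine ⟨⟨h.1, by linarith [h.2]⟩, round t, ?_⟩
  simp [modHalf]

lemma modHalf_eq_self {t : ℝ} (ht : t ∈ Ico (-(1/2) : ℝ) (1/2)) : modHalf t = t := by
  rw [modHalf_eq_toIcoMod, toIcoMod_eq_self]
  exact ⟨ht.1, by have := ht.2; linarith⟩

instance : IsProbabilityMeasure μ0 := by
  constructor
  rw [μ0, Measure.restrict_apply_univ, Real.volume_Ico]
  norm_num

instance fact_zero_lt_one_real : Fact ((0:ℝ) < 1) := ⟨one_pos⟩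

lemma map_modHalf_add (c : ℝ) : μ0.map (fun x => modHalf (x + c)) = μ0 := by
  set g : AddCircle (1:ℝ) → ℝ :=
    fun q => ((AddCircle.measurableEquivIco 1 (-(1/2)) q : Ico (-(1/2):ℝ) (-(1/2)+1)) : ℝ) with hgdef
  have hg : Measurable g :=
    measurable_subtype_coe.comp (AddCircle.measurableEquivIco 1 (-(1/2))).measurable
  have hmk : Measurable (fun x : ℝ => (x : AddCircle (1:ℝ))) := AddCircle.measurable_mk'
  have hgmk : ∀ x : ℝ, g (x : AddCircle (1:ℝ)) = modHalf x := by
    intro x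
    rw [modHalf_eq_toIcoMod]
    simp [hgdef, AddCircle.measurableEquivIco, AddCircle.equivIco,
      QuotientAddGroup.equivIcoMod_coe]
  have hmap0 : μ0.map (fun x : ℝ => (x : AddCircle (1:ℝ))) = volume := by
    have h1 : μ0 = volume.restrict (Ioc (-(1/2):ℝ) (-(1/2)+1)) := by
      rw [μ0, Measure.restrict_congr_set Ico_ae_eq_Ioc]
      norm_num
    rw [h1]
    exact (AddCircle.measurePreserving_mk (T := 1) (-(1/2))).map_eq
  have hfun : (fun x : ℝ => modHalf (x + c))
      = g ∘ (fun q : AddCircle (1:ℝ) => q + (c : AddCircle (1:ℝ))) ∘ (fun x : ℝ => (x : AddCircle (1:ℝ))) := by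
    funext x
    simp only [Function.comp_apply]
    rw [← QuotientAddGroup.mk_add, hgmk]
  rw [hfun, ← Function.comp_assoc, ← Measure.map_map (hg.comp (measurable_add_const _)) hmk,
    ← Measure.map_map hg (measurable_add_const _), hmap0,
    (measurePreserving_add_right volume ((c : ℝ) : AddCircle (1:ℝ))).map_eq,
    ← hmap0, Measure.map_map hg hmk]
  have : g ∘ (fun x : ℝ => (x : AddCircle (1:ℝ))) = modHalf := funext hgmk
  rw [this]
  have hid : modHalf =ᵐ[μ0] id := by
    rw [μ0, Filter.EventuallyEq, ae_restrict_iff' measurableSet_Ico]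
    exact Filter.Eventually.of_forall fun x hx => modHalf_eq_self hx
  rw [Measure.map_congr hid, Measure.map_id]

lemma measurable_cons0 {n : ℕ} : Measurable (fun y : Fin n → ℝ => (Fin.cons (0:ℝ) y : Fin (n+1) → ℝ)) := by
  refine measurable_pi_lambda _ fun i => ?_
  refine Fin.cases ?_ (fun j => ?_) i
  · simpa using measurable_const
  · simpa using measurable_pi_apply j

lemma key (n : ℕ) (g : Fin n → (Fin n → ℝ) → ℝ) (hgmeas : ∀ i, Measurable (g i))
    (hdep : ∀ (i : Fin n) (x y : Fin n → ℝ), (∀ j, i < j → x j = y j) → g i x = g i y) :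
    MeasurePreserving (fun x (i : Fin n) => modHalf (x i + g i x))
      (Measure.pi fun _ => μ0) (Measure.pi fun _ => μ0) := by
  induction n with
  | zero =>
      have : (fun x (i : Fin 0) => modHalf (x i + g i x)) = id := Subsingleton.elim _ _
      rw [this]
      exact MeasurePreserving.id _
  | succ n ih =>
      set μn : Measure (Fin n → ℝ) := Measure.pi fun _ => μ0 with hμn
      set e := MeasurableEquiv.piFinSuccAbove (fun _ : Fin (n+1) => ℝ) 0 with he_def
      have he : MeasurePreserving e (Measure.pi fun _ : Fin (n+1) => μ0) (μ0.prod μn) :=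
        measurePreserving_piFinSuccAbove (fun _ => μ0) 0
      set g' : Fin n → (Fin n → ℝ) → ℝ := fun j y => g j.succ (Fin.cons 0 y) with hg'def
      have hg'meas : ∀ j, Measurable (g' j) := fun j => (hgmeas j.succ).comp measurable_cons0
      have hg'dep : ∀ (i : Fin n) (x y : Fin n → ℝ), (∀ j, i < j → x j = y j) → g' i x = g' i y := by
        intro i x y hxy
        refine hdep i.succ _ _ fun k => ?_
        refine Fin.cases ?_ (fun m hm => ?_) k
        · intro h
          exact absurd h (Fin.not_lt_zero _)
        · simp only [Fin.cons_succ]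
          exact hxy m (by simpa [Fin.succ_lt_succ_iff] using hm)
      have ihF := ih g' hg'meas hg'dep
      set F' : (Fin n → ℝ) → (Fin n → ℝ) := fun y j => modHalf (y j + g' j y) with hF'def
      set g₀ : (Fin n → ℝ) → ℝ := fun y => g 0 (Fin.cons 0 y) with hg₀def
      have hg₀ : Measurable g₀ := (hgmeas 0).comp measurable_cons0
      have hK : MeasurePreserving
          (fun p : (Fin n → ℝ) × ℝ => (F' p.1, modHalf (p.2 + g₀ p.1)))
          (μn.prod μ0) (μn.prod μ0) :=
        ihF.skew_product (g := fun y c => modHalf (c + g₀ y))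
          (show Measurable fun p : (Fin n → ℝ) × ℝ => modHalf (p.2 + g₀ p.1) from
            measurable_modHalf.comp (measurable_snd.add (hg₀.comp measurable_fst)))
          (Filter.Eventually.of_forall fun y => map_modHalf_add (g₀ y))
      set H : ℝ × (Fin n → ℝ) → ℝ × (Fin n → ℝ) :=
        fun p => (modHalf (p.1 + g₀ p.2), F' p.2) with hHdef
      have hH : MeasurePreserving H (μ0.prod μn) (μ0.prod μn) := by
        have hcomp := (Measure.measurePreserving_swap (μ := μn) (ν := μ0)).comp
          (hK.comp (Measure.measurePreserving_swap (μ := μ0) (ν := μn)))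
        have : H = Prod.swap ∘ (fun p : (Fin n → ℝ) × ℝ => (F' p.1, modHalf (p.2 + g₀ p.1)))
            ∘ Prod.swap := rfl
        rw [this]
        exact hcomp
      have hagree : ∀ (x : Fin (n+1) → ℝ) (i : Fin (n+1)),
          g i x = g i (Fin.cons 0 (fun j => x j.succ)) := by
        intro x i
        refine hdep i _ _ fun k => ?_
        refine Fin.cases ?_ (fun m hm => ?_) k
        · intro h
          exact absurd h (Fin.not_lt_zero _)
        · simp only [Fin.cons_succ]
      have heF : ∀ x : Fin (n+1) → ℝ,
          e (fun i => modHalf (x i + g i x)) = H (e x) := by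
        intro x
        have hex : e x = (x 0, fun j => x (Fin.succAbove 0 j)) := rfl
        have hex2 : e (fun i => modHalf (x i + g i x))
            = (modHalf (x 0 + g 0 x),
               fun j => modHalf (x (Fin.succAbove 0 j) + g (Fin.succAbove 0 j) x)) := rfl
        rw [hex2, hex, hHdef]
        simp only [Fin.succAbove_zero]
        refine Prod.ext ?_ ?_
        · simp only [hg₀def]
          rw [hagree x 0]
        · funext j
          simp only [hF'def, hg'def]
          rw [hagree x j.succ]
      have hFeq : (fun x (i : Fin (n+1)) => modHalf (x i + g i x)) = e.symm ∘ H ∘ e := by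
        funext x
        have := heF x
        apply_fun e.symm at this
        simpa using this
      rw [hFeq]
      exact (he.symm e).comp (hH.comp he)

lemma Tm_bt {n : ℕ} (T : Matrix (Fin n) (Fin n) ℤ)
    (hTut : ∀ i j : Fin n, j < i → T i j = 0) :
    ((T.map (Int.cast : ℤ → ℝ))).BlockTriangular id := by
  intro i j hij
  simp only [Matrix.map_apply, id] at *
  rw [hTut i j hij]; simp

lemma Tm_det {n : ℕ} (T : Matrix (Fin n) (Fin n) ℤ)
    (hTut : ∀ i j : Fin n, j < i → T i j = 0) (hTdiag : ∀ i, T i i = 1) :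
    IsUnit (T.map (Int.cast : ℤ → ℝ)).det := by
  rw [Matrix.det_of_upperTriangular (Tm_bt T hTut)]
  have h : ∀ i : Fin n, (T.map (Int.cast : ℤ → ℝ)) i i = 1 := by
    intro i; simp [Matrix.map_apply, hTdiag i]
  rw [Finset.prod_congr rfl fun i _ => h i]
  simp

lemma M_bt {n : ℕ} (T : Matrix (Fin n) (Fin n) ℤ)
    (hTut : ∀ i j : Fin n, j < i → T i j = 0) (hTdiag : ∀ i, T i i = 1) :
    ((T.map (Int.cast : ℤ → ℝ))⁻¹).BlockTriangular id := by
  haveI : Invertible (T.map (Int.cast : ℤ → ℝ)) :=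
    (T.map (Int.cast : ℤ → ℝ)).invertibleOfIsUnitDet (Tm_det T hTut hTdiag)
  exact Matrix.blockTriangular_inv_of_blockTriangular (Tm_bt T hTut)

lemma M_diag {n : ℕ} (T : Matrix (Fin n) (Fin n) ℤ)
    (hTut : ∀ i j : Fin n, j < i → T i j = 0) (hTdiag : ∀ i, T i i = 1) (i : Fin n) :
    ((T.map (Int.cast : ℤ → ℝ))⁻¹) i i = 1 := by
  have h1 : ((T.map (Int.cast : ℤ → ℝ))⁻¹ * (T.map (Int.cast : ℤ → ℝ))) i i = 1 := by
    rw [Matrix.nonsing_inv_mul _ (Tm_det T hTut hTdiag)]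
    simp [Matrix.one_apply]
  rw [Matrix.mul_apply] at h1
  rw [Finset.sum_eq_single i] at h1
  · simpa [Matrix.map_apply, hTdiag i] using h1
  · intro k _ hk
    rcases lt_or_gt_of_ne hk with h | h
    · have h0 : ((T.map (Int.cast : ℤ → ℝ))⁻¹) i k = 0 :=
        M_bt T hTut hTdiag (show (id k : Fin n) < id i from h)
      rw [h0, zero_mul]
    · have h0 : (T.map (Int.cast : ℤ → ℝ)) k i = 0 := by
        simp only [Matrix.map_apply]
        rw [hTut k i h]; simp
      rw [h0, mul_zero]
  · simp

lemma M_mulVec {n : ℕ} (T : Matrix (Fin n) (Fin n) ℤ)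
    (hTut : ∀ i j : Fin n, j < i → T i j = 0) (hTdiag : ∀ i, T i i = 1)
    (x : Fin n → ℝ) (i : Fin n) :
    (T.map (Int.cast : ℤ → ℝ))⁻¹.mulVec x i
      = x i + ∑ j ∈ Finset.univ.filter (fun j => i < j),
          ((T.map (Int.cast : ℤ → ℝ))⁻¹) i j * x j := by
  rw [Matrix.mulVec, dotProduct]
  rw [← Finset.sum_filter_add_sum_filter_not Finset.univ (fun j => i < j)]
  rw [add_comm]
  congr 1
  rw [Finset.sum_eq_single i]
  · rw [M_diag T hTut hTdiag i, one_mul]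
  · intro k hk hki
    have hklt : k < i := by
      simp only [Finset.mem_filter] at hk
      rcases lt_or_gt_of_ne hki with h | h
      · exact h
      · exact absurd h hk.2
    rw [M_bt T hTut hTdiag (show (id k : Fin n) < id i from hklt), zero_mul]
  · intro h
    simp at h

/-- If `T` is upper unitriangular over `ℤ` and `s` has independent coordinates uniform on
`[-1/2,1/2)`, then the coordinates `Zᵢ = Mod((T⁻¹ s)ᵢ)` are independent and uniform on
`[-1/2,1/2)`; in particular `E[Z Zᵀ] = (1/12) I`. -/
theorem mod_unitriangular_inv_uniform {n : ℕ}
    (T : Matrix (Fin n) (Fin n) ℤ)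
    (hTut : ∀ i j : Fin n, j < i → T i j = 0) (hTdiag : ∀ i, T i i = 1)
    {Ω : Type*} [MeasurableSpace Ω] (P : Measure Ω) [IsProbabilityMeasure P]
    (s : Fin n → Ω → ℝ) (hmeas : ∀ i, Measurable (s i))
    (hindep : ProbabilityTheory.iIndepFun s P)
    (hunif : ∀ i, Measure.map (s i) P = volume.restrict (Set.Ico (-(1/2) : ℝ) (1/2))) :
    (ProbabilityTheory.iIndepFun
      (fun i ω => modHalf (((T.map (Int.cast : ℤ → ℝ))⁻¹.mulVec (fun j => s j ω)) i)) P) ∧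
    (∀ i, Measure.map
        (fun ω => modHalf (((T.map (Int.cast : ℤ → ℝ))⁻¹.mulVec (fun j => s j ω)) i)) P
      = volume.restrict (Set.Ico (-(1/2) : ℝ) (1/2))) ∧
    (∀ i j : Fin n,
      ∫ ω, (modHalf (((T.map (Int.cast : ℤ → ℝ))⁻¹.mulVec (fun k => s k ω)) i)
          * modHalf (((T.map (Int.cast : ℤ → ℝ))⁻¹.mulVec (fun k => s k ω)) j)) ∂P
        = if i = j then 1/12 else 0) := by
  classical
  set M : Matrix (Fin n) (Fin n) ℝ := (T.map (Int.cast : ℤ → ℝ))⁻¹ with hM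
  set g : Fin n → (Fin n → ℝ) → ℝ :=
    fun i x => ∑ j ∈ Finset.univ.filter (fun j => i < j), M i j * x j with hg
  have hgmeas : ∀ i, Measurable (g i) := by
    intro i
    exact Finset.measurable_sum _ fun j _ => (measurable_pi_apply j).const_mul _
  have hgdep : ∀ (i : Fin n) (x y : Fin n → ℝ),
      (∀ j, i < j → x j = y j) → g i x = g i y := by
    intro i x y hxy
    refine Finset.sum_congr rfl fun j hj => ?_
    rw [hxy j (by simpa using hj)]
  -- the deterministic map
  set F : (Fin n → ℝ) → (Fin n → ℝ) := fun x i => modHalf (x i + g i x) with hF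
  have hFmv : ∀ (x : Fin n → ℝ) (i : Fin n), modHalf (M.mulVec x i) = F x i := by
    intro x i
    rw [hF]
    simp only
    rw [M_mulVec T hTut hTdiag x i]
  have hkey := key n g hgmeas hgdep
  -- joint law of s
  have hsjm : Measurable (fun ω (i : Fin n) => s i ω) :=
    measurable_pi_lambda _ fun i => hmeas i
  have hjoint : Measure.map (fun ω (i : Fin n) => s i ω) P = Measure.pi fun _ => μ0 := by
    refine (Measure.pi_eq fun E hE => ?_).symm
    rw [Measure.map_apply hsjm (MeasurableSet.univ_pi hE)]
    have hpre : (fun ω (i : Fin n) => s i ω) ⁻¹' (Set.pi Set.univ E)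
        = ⋂ i ∈ Finset.univ, s i ⁻¹' E i := by
      ext ω; simp [Set.mem_pi]
    rw [hpre, hindep.measure_inter_preimage_eq_mul Finset.univ (fun i _ => hE i)]
    refine Finset.prod_congr rfl fun i _ => ?_
    rw [← Measure.map_apply (hmeas i) (hE i), hunif i]
    rfl
  -- Z and its joint law
  set Z : Fin n → Ω → ℝ := fun i ω => modHalf (M.mulVec (fun j => s j ω) i) with hZ
  have hZmeas : ∀ i, Measurable (Z i) := by
    intro i
    refine measurable_modHalf.comp ?_
    have hmve : (fun ω => M.mulVec (fun j => s j ω) i) = fun ω => ∑ j, M i j * s j ω := by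
      funext ω; rw [Matrix.mulVec, dotProduct]
    rw [hmve]
    exact Finset.measurable_sum _ fun j _ => (hmeas j).const_mul _
  have hZjm : Measurable (fun ω (i : Fin n) => Z i ω) :=
    measurable_pi_lambda _ fun i => hZmeas i
  have hZjoint : Measure.map (fun ω (i : Fin n) => Z i ω) P = Measure.pi fun _ => μ0 := by
    have hcomp : (fun ω (i : Fin n) => Z i ω) = F ∘ (fun ω (i : Fin n) => s i ω) := by
      funext ω
      funext i
      simp only [hZ, Function.comp_apply]
      exact hFmv _ i
    rw [hcomp, ← Measure.map_map hkey.measurable hsjm, hjoint, hkey.map_eq]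
  -- marginals
  have hmarg : ∀ i, Measure.map (Z i) P = μ0 := by
    intro i
    have : Z i = (fun x : Fin n → ℝ => x i) ∘ (fun ω (j : Fin n) => Z j ω) := rfl
    rw [this, ← Measure.map_map (measurable_pi_apply i) hZjm, hZjoint]
    ext E hE
    rw [Measure.map_apply (measurable_pi_apply i) hE]
    have hpre : (fun x : Fin n → ℝ => x i) ⁻¹' E
        = Set.pi Set.univ (Function.update (fun _ => Set.univ) i E) := by
      ext x
      simp only [Set.mem_preimage, Set.mem_pi, Set.mem_univ, true_implies]
      constructor
      · intro hx j
        rcases eq_or_ne j i with rfl | hj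
        · simpa using hx
        · simp [Function.update_of_ne hj]
      · intro hx
        simpa using hx i
    rw [hpre, Measure.pi_pi]
    rw [Finset.prod_eq_single i]
    · simp
    · intro j _ hj
      simp [Function.update_of_ne hj]
    · simp
  -- independence
  have hindepZ : ProbabilityTheory.iIndepFun Z P := by
    rw [ProbabilityTheory.iIndepFun_iff_measure_inter_preimage_eq_mul]
    intro S sets hsets
    have hpiS : MeasurableSet (Set.pi (↑S) sets) :=
      MeasurableSet.pi (Set.to_countable _) (fun i hi => hsets i hi)
    have hpre : (⋂ i ∈ S, Z i ⁻¹' sets i)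
        = (fun ω (i : Fin n) => Z i ω) ⁻¹' (Set.pi (↑S) sets) := by
      ext ω; simp [Set.mem_pi]
    rw [hpre, Measure.map_apply hZjm hpiS |>.symm, hZjoint]
    have hsplit : Set.pi (↑S : Set (Fin n)) sets
        = Set.pi Set.univ (fun i => if i ∈ S then sets i else Set.univ) := by
      ext x
      simp only [Set.mem_pi, Set.mem_univ, true_implies, Finset.coe_sort_coe,
        Finset.mem_coe]
      constructor
      · intro h i
        by_cases hi : i ∈ S
        · simp [hi, h i hi]
        · simp [hi]
      · intro h i hi
        have := h i
        simpa [hi] using this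
    rw [hsplit, Measure.pi_pi]
    have : ∀ i : Fin n, μ0 (if i ∈ S then sets i else Set.univ)
        = if i ∈ S then μ0 (sets i) else 1 := by
      intro i; split <;> simp
    rw [Finset.prod_congr rfl fun i _ => this i, Finset.prod_ite_mem Finset.univ S
      (fun i => μ0 (sets i)), Finset.univ_inter]
    refine Finset.prod_congr rfl fun i hi => ?_
    rw [← hmarg i, Measure.map_apply (hZmeas i) (hsets i hi)]
  refine ⟨hindepZ, fun i => hmarg i, ?_⟩
  -- moments
  intro i j
  rcases eq_or_ne i j with rfl | hij
  · simp only [if_pos rfl]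
    have hZi : ∫ ω, Z i ω * Z i ω ∂P = ∫ x, x * x ∂μ0 := by
      rw [← hmarg i, integral_map (hZmeas i).aemeasurable]
      exact (measurable_id.mul measurable_id).aestronglyMeasurable
    rw [show (fun ω => modHalf ((T.map (Int.cast : ℤ → ℝ))⁻¹.mulVec (fun k => s k ω) i)
        * modHalf ((T.map (Int.cast : ℤ → ℝ))⁻¹.mulVec (fun k => s k ω) i)) = fun ω => Z i ω * Z i ω from rfl]
    rw [hZi]
    have : ∫ x, x * x ∂μ0 = ∫ x in Set.Ioc (-(1/2) : ℝ) (1/2), x * x := by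
      rw [μ0, Measure.restrict_congr_set Ico_ae_eq_Ioc]
    rw [this, ← intervalIntegral.integral_of_le (by norm_num : (-(1/2):ℝ) ≤ 1/2)]
    have : ∀ x : ℝ, x * x = x ^ 2 := fun x => (sq x).symm
    simp_rw [this]
    rw [integral_pow]
    norm_num
  · simp only [if_neg hij]
    have hIF : ProbabilityTheory.IndepFun (Z i) (Z j) P := hindepZ.indepFun hij
    have h1 : ∫ ω, Z i ω * Z j ω ∂P = (∫ ω, Z i ω ∂P) * ∫ ω, Z j ω ∂P := by
      exact hIF.integral_fun_mul_eq_mul_integral (hZmeas i).aestronglyMeasurable (hZmeas j).aestronglyMeasurable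
    have hzero : ∀ k, ∫ ω, Z k ω ∂P = 0 := by
      intro k
      have : ∫ ω, Z k ω ∂P = ∫ x, x ∂μ0 := by
        rw [← hmarg k, integral_map (hZmeas k).aemeasurable]
        exact measurable_id.aestronglyMeasurable
      rw [this]
      have h2 : ∫ x, x ∂μ0 = ∫ x in Set.Ioc (-(1/2) : ℝ) (1/2), x := by
        rw [μ0, Measure.restrict_congr_set Ico_ae_eq_Ioc]
      rw [h2, ← intervalIntegral.integral_of_le (by norm_num : (-(1/2):ℝ) ≤ 1/2),
        integral_id]
      norm_num
    rw [show (fun ω => modHalf ((T.map (Int.cast : ℤ → ℝ))⁻¹.mulVec (fun k => s k ω) i)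
        * modHalf ((T.map (Int.cast : ℤ → ℝ))⁻¹.mulVec (fun k => s k ω) j)) = fun ω => Z i ω * Z j ω from rfl]
    rw [h1, hzero i, hzero j, mul_zero]
end

section
/- Let R be an n×n upper triangular real matrix with positive diagonal r₁₁,…,rₙₙ, and let s ∈ ℝⁿ. Define a ∈ ℤⁿ recursively (from i = n down to 1) by aᵢ = −round(sᵢ + ∑_{j>i} (rᵢⱼ/rᵢᵢ)(sⱼ + aⱼ)). Then for every i, |(R(s+a))ᵢ| ≤ rᵢᵢ/2, and hence ‖R(s+a)‖² ≤ (1/4)∑ᵢ rᵢᵢ². -/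
open Matrix Finset

/-- The Babai nearest-plane residual bound: if `a` satisfies the nearest-plane recursion
`aᵢ = −round(sᵢ + ∑_{j>i} (rᵢⱼ/rᵢᵢ)(sⱼ + aⱼ))`, then `|(R(s+a))ᵢ| ≤ rᵢᵢ/2` for every `i`
and `‖R(s+a)‖² ≤ (1/4)∑ rᵢᵢ²`. -/
theorem nearest_plane_residual_bound {n : ℕ}
    (R : Matrix (Fin n) (Fin n) ℝ)
    (hRut : ∀ i j : Fin n, j < i → R i j = 0)
    (hRdiag : ∀ i, 0 < R i i)
    (s : Fin n → ℝ) (a : Fin n → ℤ)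
    (ha : ∀ i, a i = -round (s i +
      ∑ j ∈ Finset.univ.filter (fun j => i < j), (R i j / R i i) * (s j + (a j : ℝ)))) :
    (∀ i, |(R.mulVec (s + fun j => ((a j : ℤ) : ℝ))) i| ≤ R i i / 2) ∧
    (∑ i, ((R.mulVec (s + fun j => ((a j : ℤ) : ℝ))) i) ^ 2 ≤ (1/4) * ∑ i, (R i i) ^ 2) := by
  have key : ∀ i, |(R.mulVec (s + fun j => ((a j : ℤ) : ℝ))) i| ≤ R i i / 2 := by
    intro i
    set t : ℝ := s i +
      ∑ j ∈ Finset.univ.filter (fun j => i < j), (R i j / R i i) * (s j + (a j : ℝ)) with ht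
    have hne : R i i ≠ 0 := (hRdiag i).ne'
    have hmv : (R.mulVec (s + fun j => ((a j : ℤ) : ℝ))) i = R i i * (t - round t) := by
      have hsplit : (R.mulVec (s + fun j => ((a j : ℤ) : ℝ))) i
          = R i i * (s i + (a i : ℝ)) +
            ∑ j ∈ Finset.univ.filter (fun j => i < j), R i j * (s j + (a j : ℝ)) := by
        unfold Matrix.mulVec dotProduct
        rw [← Finset.sum_filter_add_sum_filter_not Finset.univ (fun j => i < j)]
        have h1 : ∑ j ∈ Finset.univ.filter (fun j => ¬ i < j),
            R i j * (s + fun k => ((a k : ℤ) : ℝ)) j = R i i * (s i + (a i : ℝ)) := by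
          rw [Finset.sum_eq_single i]
          · simp
          · intro j hj hji
            simp only [Finset.mem_filter, not_lt] at hj
            rw [hRut i j (lt_of_le_of_ne hj.2 hji), zero_mul]
          · simp
        rw [h1]
        simp only [Pi.add_apply]
        ring
      have h2 : ∑ j ∈ Finset.univ.filter (fun j => i < j), R i j * (s j + (a j : ℝ))
          = R i i * (t - s i) := by
        rw [ht, add_sub_cancel_left, Finset.mul_sum]
        apply Finset.sum_congr rfl
        intro j _
        field_simp
      rw [hsplit, h2, ha i]
      push_cast
      ring
    rw [hmv, abs_mul, abs_of_pos (hRdiag i)]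
    have : |t - round t| ≤ 1/2 := abs_sub_round t
    calc R i i * |t - round t| ≤ R i i * (1/2) := by
          exact mul_le_mul_of_nonneg_left this (hRdiag i).le
      _ = R i i / 2 := by ring
  refine ⟨key, ?_⟩
  calc ∑ i, ((R.mulVec (s + fun j => ((a j : ℤ) : ℝ))) i) ^ 2
      ≤ ∑ i, (R i i / 2) ^ 2 := by
        apply Finset.sum_le_sum
        intro i _
        have := key i
        have h0 : (0:ℝ) ≤ R i i / 2 := by linarith [(hRdiag i).le]
        nlinarith [abs_nonneg ((R.mulVec (s + fun j => ((a j : ℤ) : ℝ))) i),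
          sq_abs ((R.mulVec (s + fun j => ((a j : ℤ) : ℝ))) i)]
    _ = (1/4) * ∑ i, (R i i) ^ 2 := by
        rw [Finset.mul_sum]
        apply Finset.sum_congr rfl
        intro i _
        ring
end
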